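/- Let g : [0, h] → ℝ be three times continuously differentiable and let ĝ be the quadratic polynomial matching g(0), g(h), and ∫₀ʰ g. Then sup_{x ∈ [0,h]} |g(x) − ĝ(x)| ≤ C h³ sup_{x∈[0,h]} |g'''(x)| for an absolute constant C (one may take C = 1/12). -/

import Mathlib

/-!
Fix `x ∈ [0, h]` and let `q` be the second-order Taylor polynomial of `g` at `x`. The map
`g ↦ ĝ` is linear and reproduces quadratics, so `g x - ĝ x = -r̂ x` for the remainder
`r = g - q`, which satisfies `|r y| ≤ M |y - x|³ / 6`. Since `r̂ x` is an explicit combination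
of `r 0`, `r h` and `∫₀ʰ r`, the Lagrange bounds on these three quantities reduce the claim to a
polynomial inequality in `s = x` and `t = h - x`, which survives even the crude bound
`|t - 2s| ≤ t + 2s` on the coefficient of `r 0` (and symmetrically of `r h`).
-/

open intervalIntegral

/-- The quadratic approximant `ĝ` of `g` on `[0, h]` matching the endpoint
values `g 0`, `g h` and the integral `∫₀ʰ g`. -/
noncomputable def ghat (g : ℝ → ℝ) (h : ℝ) (x : ℝ) : ℝ :=
  g 0 * ((h - x) / h) + g h * (x / h) +
    (6 / h ^ 3 * ((∫ t in (0:ℝ)..h, g t) - h * (g 0 + g h) / 2)) * (x * (h - x))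

open Set Finset Nat

theorem taylorWithinEval_eq_sum_iteratedDeriv {f : ℝ → ℝ} {n : ℕ} {s : Set ℝ} {x₀ : ℝ}
    (hf : ContDiffAt ℝ n f x₀) (hs : UniqueDiffOn ℝ s) (hx₀ : x₀ ∈ s) (x : ℝ) :
    taylorWithinEval f n s x₀ x =
      ∑ k ∈ range (n + 1), iteratedDeriv k f x₀ / k ! * (x - x₀) ^ k := by
  rw [taylor_within_apply]
  refine sum_congr rfl fun k hk => ?_
  rw [iteratedDerivWithin_eq_iteratedDeriv hs
    (hf.of_le (by exact_mod_cast mem_range_succ_iff.1 hk)) hx₀, smul_eq_mul]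
  ring

theorem abs_sub_sum_iteratedDeriv_le {f : ℝ → ℝ} {n : ℕ} (hf : ContDiff ℝ (n + 1) f)
    {s : Set ℝ} (hs : s.OrdConnected) {M : ℝ}
    (hM : ∀ y ∈ s, |iteratedDeriv (n + 1) f y| ≤ M) {x₀ x : ℝ} (hx₀ : x₀ ∈ s) (hx : x ∈ s) :
    |f x - ∑ k ∈ range (n + 1), iteratedDeriv k f x₀ / k ! * (x - x₀) ^ k|
      ≤ M * |x - x₀| ^ (n + 1) / (n + 1)! := by
  rcases eq_or_ne x₀ x with rfl | hne
  · simp [sum_range_succ', iteratedDeriv_zero]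
  obtain ⟨ξ, hξ, hrem⟩ := taylor_mean_remainder_lagrange_iteratedDeriv hne hf.contDiffOn
  rw [← taylorWithinEval_eq_sum_iteratedDeriv (hf.of_le (by norm_cast; omega)).contDiffAt
    (uniqueDiffOn_uIcc hne) left_mem_uIcc, hrem, abs_div, abs_mul, abs_pow,
    abs_of_pos (by positivity : (0 : ℝ) < (n + 1)!)]
  gcongr
  exact hM ξ (hs.uIcc_subset hx₀ hx (uIoo_subset_uIcc_self hξ))

theorem ghat_add {f q : ℝ → ℝ} {h : ℝ} (hf : IntervalIntegrable f MeasureTheory.volume 0 h)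
    (hq : IntervalIntegrable q MeasureTheory.volume 0 h) (x : ℝ) :
    ghat (f + q) h x = ghat f h x + ghat q h x := by
  simp only [ghat, Pi.add_apply, integral_add hf hq]
  ring

theorem ghat_quadratic {h : ℝ} (hh : h ≠ 0) (a b c x₀ x : ℝ) :
    ghat (fun y => a + b * (y - x₀) + c * (y - x₀) ^ 2) h x =
      a + b * (x - x₀) + c * (x - x₀) ^ 2 := by
  have hint : ∫ y in (0:ℝ)..h, a + b * (y - x₀) + c * (y - x₀) ^ 2
      = a * h + b * ((h - x₀) ^ 2 - x₀ ^ 2) / 2 + c * ((h - x₀) ^ 3 + x₀ ^ 3) / 3 := by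
    rw [integral_comp_sub_right (fun u => a + b * u + c * u ^ 2), integral_add, integral_add,
      integral_const, integral_const_mul, integral_id, integral_const_mul, integral_pow,
      smul_eq_mul]
    · ring
    all_goals exact (by fun_prop : Continuous _).intervalIntegrable _ _
  simp only [ghat, hint]
  field_simp
  ring

theorem integral_abs_sub_pow {a b x : ℝ} (hax : a ≤ x) (hxb : x ≤ b) (n : ℕ) :
    ∫ y in a..b, |y - x| ^ n = ((x - a) ^ (n + 1) + (b - x) ^ (n + 1)) / (n + 1) := by
  have hc : Continuous fun y => |y - x| ^ n := by fun_prop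
  have hleft : ∫ y in a..x, |y - x| ^ n = ∫ y in a..x, (x - y) ^ n :=
    integral_congr fun y hy => by
      rw [uIcc_of_le hax] at hy
      simp [abs_of_nonpos (sub_nonpos.2 hy.2)]
  have hright : ∫ y in x..b, |y - x| ^ n = ∫ y in x..b, (y - x) ^ n :=
    integral_congr fun y hy => by
      rw [uIcc_of_le hxb] at hy
      simp [abs_of_nonneg (sub_nonneg.2 hy.1)]
  rw [← integral_add_adjacent_intervals (hc.intervalIntegrable a x) (hc.intervalIntegrable x b),
    hleft, hright, integral_comp_sub_left (fun u => u ^ n),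
    integral_comp_sub_right (fun u => u ^ n), integral_pow, integral_pow, sub_self,
    zero_pow (succ_ne_zero n)]
  ring

theorem abs_ghat_numerator_le {s t u v I K : ℝ} (hs : 0 ≤ s) (ht : 0 ≤ t) (hK : 0 ≤ K)
    (hu : |u| ≤ K * s ^ 3) (hv : |v| ≤ K * t ^ 3) (hI : |I| ≤ K * (s ^ 4 + t ^ 4) / 4) :
    |u * t * (s + t) ^ 2 + v * s * (s + t) ^ 2 + 6 * (I - (s + t) * (u + v) / 2) * (s * t)|
      ≤ K / 2 * (s + t) ^ 6 := by
  have hst : |t - 2 * s| ≤ t + 2 * s :=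
    (abs_sub _ _).trans (by rw [abs_of_nonneg ht, abs_of_nonneg (by positivity)])
  have hts : |s - 2 * t| ≤ s + 2 * t :=
    (abs_sub _ _).trans (by rw [abs_of_nonneg hs, abs_of_nonneg (by positivity)])
  calc _ = |u * (t * (s + t) * (t - 2 * s)) + v * (s * (s + t) * (s - 2 * t))
          + I * (6 * s * t)| := by congr 1; ring
    _ ≤ |u| * (t * (s + t) * |t - 2 * s|) + |v| * (s * (s + t) * |s - 2 * t|)
          + |I| * (6 * s * t) := by
          refine (abs_add_three _ _ _).trans_eq ?_
          simp only [abs_mul, abs_of_nonneg hs, abs_of_nonneg ht, abs_of_nonneg (add_nonneg hs ht)]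
          norm_num
    _ ≤ K * s ^ 3 * (t * (s + t) * (t + 2 * s)) + K * t ^ 3 * (s * (s + t) * (s + 2 * t))
          + K * (s ^ 4 + t ^ 4) / 4 * (6 * s * t) := by gcongr
    _ ≤ K / 2 * (s + t) ^ 6 := by
          nlinarith [mul_nonneg hK (mul_nonneg (pow_nonneg hs 4) (sq_nonneg (s - t / 2))),
            mul_nonneg hK (mul_nonneg (pow_nonneg ht 4) (sq_nonneg (t - s / 2))),
            mul_nonneg hK (mul_nonneg (pow_nonneg (mul_nonneg hs ht) 2)
              (add_nonneg (sq_nonneg s) (sq_nonneg t))),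
            mul_nonneg hK (pow_nonneg (mul_nonneg hs ht) 3)]

theorem abs_ghat_le {r : ℝ → ℝ} {h x K : ℝ} (hh : 0 < h) (hx : x ∈ Icc 0 h) (hK : 0 ≤ K)
    (hr : ∀ y ∈ Icc 0 h, |r y| ≤ K * |y - x| ^ 3) : |ghat r h x| ≤ K / 2 * h ^ 3 := by
  have hr0 : |r 0| ≤ K * x ^ 3 := by
    simpa [abs_of_nonneg hx.1] using hr 0 (left_mem_Icc.2 hh.le)
  have hrh : |r h| ≤ K * (h - x) ^ 3 := by
    simpa [abs_of_nonneg (sub_nonneg.2 hx.2)] using hr h (right_mem_Icc.2 hh.le)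
  have hI : |∫ y in (0:ℝ)..h, r y| ≤ K * (x ^ 4 + (h - x) ^ 4) / 4 := calc
    _ ≤ ∫ y in (0:ℝ)..h, K * |y - x| ^ 3 :=
        norm_integral_le_of_norm_le (f := r) (g := fun y => K * |y - x| ^ 3) hh.le
          (Filter.Eventually.of_forall fun y hy => hr y (Ioc_subset_Icc_self hy))
          (Continuous.intervalIntegrable (by fun_prop) _ _)
    _ = K * (x ^ 4 + (h - x) ^ 4) / 4 := by
        rw [integral_const_mul, integral_abs_sub_pow hx.1 hx.2]
        push_cast
        ring
  have hE := abs_ghat_numerator_le hx.1 (sub_nonneg.2 hx.2) hK hr0 hrh hI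
  rw [add_sub_cancel] at hE
  have hghat : ghat r h x = (r 0 * (h - x) * h ^ 2 + r h * x * h ^ 2
      + 6 * ((∫ y in (0:ℝ)..h, r y) - h * (r 0 + r h) / 2) * (x * (h - x))) / h ^ 3 := by
    rw [ghat]
    field_simp
  rw [hghat, abs_div, abs_of_pos (pow_pos hh 3), div_le_iff₀ (pow_pos hh 3)]
  exact hE.trans_eq (by ring)

/-- Uniform third-order accuracy: if `g` is `C³` and `|g'''| ≤ M` on `[0, h]`,
then `|g(x) − ĝ(x)| ≤ (1/12) h³ M` on `[0, h]`. -/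
theorem stmt9 (g : ℝ → ℝ) (hg : ContDiff ℝ 3 g) (h : ℝ) (hh : 0 < h) (M : ℝ)
    (hM : ∀ y ∈ Set.Icc (0:ℝ) h, |iteratedDeriv 3 g y| ≤ M) :
    ∀ x ∈ Set.Icc (0:ℝ) h, |g x - ghat g h x| ≤ (1 / 12) * h ^ 3 * M := by
  intro x hx
  set q : ℝ → ℝ := fun y => g x + deriv g x * (y - x) + iteratedDeriv 2 g x / 2 * (y - x) ^ 2
  have hq : Continuous q := by fun_prop
  have htaylor : ∀ y ∈ Icc 0 h, |(g - q) y| ≤ M / 6 * |y - x| ^ 3 := fun y hy => by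
    have := abs_sub_sum_iteratedDeriv_le (n := 2) hg ordConnected_Icc hM hx hy
    simp only [sum_range_succ, sum_range_zero, iteratedDeriv_zero, iteratedDeriv_one] at this
    convert this using 2
    · simp only [q, Pi.sub_apply, factorial]
      ring
    · norm_num [factorial]
      ring
  have hghat : ghat g h x = g x + ghat (g - q) h x := by
    conv_lhs => rw [← add_sub_cancel q g]
    rw [ghat_add (hq.intervalIntegrable _ _) ((hg.continuous.sub hq).intervalIntegrable _ _),
      ghat_quadratic hh.ne']
    simp
  calc |g x - ghat g h x| = |ghat (g - q) h x| := by rw [hghat, sub_add_cancel_left, abs_neg]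
    _ ≤ M / 6 / 2 * h ^ 3 :=
        abs_ghat_le hh hx (by linarith [(abs_nonneg _).trans (hM x hx)]) htaylor
    _ = 1 / 12 * h ^ 3 * M := by ring
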